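/- arXiv:2108.08673 — 3 statements merged into one kernel-verified Lean document; each statement's English description precedes it below -/
import Mathlib

section
/- For all nonnegative reals S₁, I₁, S₂, I₂, the incidence function satisfies |βS₁I₁/(1+k₁S₁+k₂I₁+k₃S₁I₁) − βS₂I₂/(1+k₁S₂+k₂I₂+k₃S₂I₂)| ≤ βI₂|S₁−S₂| + βS₁|I₁−I₂| + βk₁S₁S₂|I₁−I₂| + βk₂I₁I₂|S₁−S₂|. -/
/-!
Over the common denominator D₁D₂ the difference of the two values of the incidence function
has numerator β(S₁I₁D₂ − S₂I₂D₁), in which the k₃ terms cancel and the remaining ones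
regroup into the four terms of the bound. For nonnegative data both denominators are at
least 1, so dividing by D₁D₂ only makes the numerator smaller, and the triangle inequality
finishes the estimate.
-/

theorem abs_add_add_add_le {α : Type*} [AddCommGroup α] [LinearOrder α] [IsOrderedAddMonoid α]
    (a b c d : α) : |a + b + c + d| ≤ |a| + |b| + |c| + |d| :=
  calc |a + b + c + d| ≤ |a + b + c| + |d| := abs_add_le _ _
    _ ≤ |a + b| + |c| + |d| := by gcongr; exact abs_add_le _ _
    _ ≤ |a| + |b| + |c| + |d| := by gcongr; exact abs_add_le _ _

theorem abs_div_le_abs_of_one_le {α : Type*} [Field α] [LinearOrder α] [IsStrictOrderedRing α]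
    (a : α) {b : α} (hb : 1 ≤ b) : |a / b| ≤ |a| := by
  rw [abs_div, abs_of_pos (zero_lt_one.trans_le hb)]
  exact div_le_self (abs_nonneg a) hb

theorem one_le_incidence_denom {k₁ k₂ k₃ S I : ℝ} (hk₁ : 0 ≤ k₁) (hk₂ : 0 ≤ k₂) (hk₃ : 0 ≤ k₃)
    (hS : 0 ≤ S) (hI : 0 ≤ I) : 1 ≤ 1 + k₁ * S + k₂ * I + k₃ * S * I := by
  have : 0 ≤ k₁ * S + k₂ * I + k₃ * S * I := by positivity
  linarith

theorem incidence_sub_incidence (β k₁ k₂ k₃ S₁ I₁ S₂ I₂ : ℝ)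
    (hD₁ : 1 + k₁ * S₁ + k₂ * I₁ + k₃ * S₁ * I₁ ≠ 0)
    (hD₂ : 1 + k₁ * S₂ + k₂ * I₂ + k₃ * S₂ * I₂ ≠ 0) :
    β * S₁ * I₁ / (1 + k₁ * S₁ + k₂ * I₁ + k₃ * S₁ * I₁) -
      β * S₂ * I₂ / (1 + k₁ * S₂ + k₂ * I₂ + k₃ * S₂ * I₂) =
      (β * I₂ * (S₁ - S₂) + β * S₁ * (I₁ - I₂) + β * k₁ * S₁ * S₂ * (I₁ - I₂)
        + β * k₂ * I₁ * I₂ * (S₁ - S₂)) /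
      ((1 + k₁ * S₁ + k₂ * I₁ + k₃ * S₁ * I₁) * (1 + k₁ * S₂ + k₂ * I₂ + k₃ * S₂ * I₂)) := by
  rw [div_sub_div _ _ hD₁ hD₂]
  ring

theorem incidence_lipschitz_bound (β k₁ k₂ k₃ : ℝ) (hβ : 0 < β)
    (hk₁ : 0 ≤ k₁) (hk₂ : 0 ≤ k₂) (hk₃ : 0 ≤ k₃)
    (S₁ I₁ S₂ I₂ : ℝ) (hS₁ : 0 ≤ S₁) (hI₁ : 0 ≤ I₁) (hS₂ : 0 ≤ S₂) (hI₂ : 0 ≤ I₂) :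
    |β * S₁ * I₁ / (1 + k₁ * S₁ + k₂ * I₁ + k₃ * S₁ * I₁) -
      β * S₂ * I₂ / (1 + k₁ * S₂ + k₂ * I₂ + k₃ * S₂ * I₂)| ≤
      β * I₂ * |S₁ - S₂| + β * S₁ * |I₁ - I₂| + β * k₁ * S₁ * S₂ * |I₁ - I₂|
        + β * k₂ * I₁ * I₂ * |S₁ - S₂| := by
  have hD₁ := one_le_incidence_denom hk₁ hk₂ hk₃ hS₁ hI₁
  have hD₂ := one_le_incidence_denom hk₁ hk₂ hk₃ hS₂ hI₂
  rw [incidence_sub_incidence _ _ _ _ _ _ _ _ (by positivity) (by positivity)]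
  refine (abs_div_le_abs_of_one_le _ (one_le_mul_of_one_le_of_one_le hD₁ hD₂)).trans ?_
  refine (abs_add_add_add_le _ _ _ _).trans (le_of_eq ?_)
  simp only [abs_mul, abs_of_pos hβ, abs_of_nonneg hk₁, abs_of_nonneg hk₂, abs_of_nonneg hS₁,
    abs_of_nonneg hI₁, abs_of_nonneg hS₂, abs_of_nonneg hI₂]
end

section
/- Let X be a complete metric space of continuous functions Ω : [0,δ] → ℝ³ with Ω(0) = Ω₀, equipped with the sup-ℓ¹-norm, and let Θ be the Picard operator (ΘΩ)(t) = Ω₀ + ((1−α)/B(α))·F(Ω(t)) + (α/(B(α)Γ(α)))·∫₀ᵗ (t−p)^{α−1} F(Ω(p)) dp. If F is Lipschitz with constant L on the relevant set, then for all Ω₁, Ω₂ in X, ‖ΘΩ₁ − ΘΩ₂‖_∞ ≤ L((1−α)/B(α) + δ^α/(B(α)Γ(α)))·‖Ω₁ − Ω₂‖_∞. -/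
open Set MeasureTheory

/-- State space `ℝ³` with the `ℓ¹` norm. -/
noncomputable abbrev V := PiLp 1 (fun _ : Fin 3 => ℝ)

/-- The Picard operator associated with the ABC fractional SIRS integral equation. -/
noncomputable def picard (α B : ℝ) (Ω₀ : V) (F : V → V) (Ω : ℝ → V) (t : ℝ) : V :=
  Ω₀ + ((1 - α) / B) • F (Ω t)
    + (α / (B * Real.Gamma α)) • ∫ p in (0:ℝ)..t, ((t - p) ^ (α - 1)) • F (Ω p)

/-!
Both terms of the Picard operator depend linearly on `F ∘ Ω`, and `F` is `L`-Lipschitz, so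
`‖F (Ω₁ p) - F (Ω₂ p)‖ ≤ L ‖Ω₁ - Ω₂‖_∞`. The local term then contributes the factor `(1 - α) / B`;
the memory term contributes `α / (B Γ(α))` times the kernel mass `∫₀ᵗ (t - p)^(α-1) dp = t^α / α`,
that is `t^α / (B Γ(α)) ≤ δ^α / (B Γ(α))`.
-/

theorem norm_le_biSup_norm_of_continuousOn {X E : Type*} [TopologicalSpace X]
    [SeminormedAddCommGroup E] {s : Set X} {f : X → E} (hs : IsCompact s)
    (hf : ContinuousOn f s) {x : X} (hx : x ∈ s) :
    ‖f x‖ ≤ ⨆ y ∈ s, ‖f y‖ := by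
  refine le_ciSup₂ (f := fun y (_ : y ∈ s) => ‖f y‖) ?_ x hx
  refine (hs.image_of_continuousOn hf.norm).bddAbove.mono ?_
  simp only [iUnion_subset_iff, range_subset_iff]
  exact fun y hy => mem_image_of_mem _ hy

section FractionalKernel

variable {E : Type*} [NormedAddCommGroup E] [NormedSpace ℝ E] {α t : ℝ}

theorem integral_sub_rpow_sub_one (hα : 0 < α) (t : ℝ) :
    ∫ p in (0:ℝ)..t, (t - p) ^ (α - 1) = t ^ α / α := by
  rw [intervalIntegral.integral_comp_sub_left (fun x : ℝ => x ^ (α - 1)), sub_self, sub_zero,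
    integral_rpow (Or.inl (by linarith)), sub_add_cancel, Real.zero_rpow hα.ne', sub_zero]

theorem intervalIntegrable_sub_rpow_sub_one (hα : 0 < α) (t : ℝ) :
    IntervalIntegrable (fun p => (t - p) ^ (α - 1)) volume 0 t := by
  simpa using
    ((intervalIntegral.intervalIntegrable_rpow' (a := 0) (b := t) (by linarith : -1 < α - 1)).comp_sub_left t).symm

theorem ContinuousOn.intervalIntegrable_sub_rpow_smul (hα : 0 < α) (ht : 0 ≤ t) {u : ℝ → E}
    (hu : ContinuousOn u (Icc 0 t)) :
    IntervalIntegrable (fun p => (t - p) ^ (α - 1) • u p) volume 0 t := by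
  rw [intervalIntegrable_iff_integrableOn_Icc_of_le ht]
  exact ((intervalIntegrable_iff_integrableOn_Icc_of_le ht).mp
    (intervalIntegrable_sub_rpow_sub_one hα t)).smul_continuousOn hu isCompact_Icc

theorem norm_integral_sub_rpow_smul_le (hα : 0 < α) (ht : 0 ≤ t) {u : ℝ → E} {C : ℝ}
    (hu : ∀ p ∈ Ioc 0 t, ‖u p‖ ≤ C) :
    ‖∫ p in (0:ℝ)..t, (t - p) ^ (α - 1) • u p‖ ≤ C * (t ^ α / α) := by
  calc ‖∫ p in (0:ℝ)..t, (t - p) ^ (α - 1) • u p‖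
      ≤ ∫ p in (0:ℝ)..t, C * (t - p) ^ (α - 1) := by
        refine intervalIntegral.norm_integral_le_of_norm_le ht (ae_of_all _ fun p hp => ?_)
          ((intervalIntegrable_sub_rpow_sub_one hα t).const_mul C)
        have hkernel : 0 ≤ (t - p) ^ (α - 1) := Real.rpow_nonneg (by linarith [hp.2]) _
        rw [norm_smul, Real.norm_of_nonneg hkernel, mul_comm]
        exact mul_le_mul_of_nonneg_right (hu p hp) hkernel
    _ = C * (t ^ α / α) := by
        rw [intervalIntegral.integral_const_mul, integral_sub_rpow_sub_one hα]

end FractionalKernel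

section Picard

variable {α B L t : ℝ} {Ω₀ : V} {F : V → V} {Ω₁ Ω₂ : ℝ → V}

theorem picard_sub_picard
    (h₁ : IntervalIntegrable (fun p => (t - p) ^ (α - 1) • F (Ω₁ p)) volume 0 t)
    (h₂ : IntervalIntegrable (fun p => (t - p) ^ (α - 1) • F (Ω₂ p)) volume 0 t) :
    picard α B Ω₀ F Ω₁ t - picard α B Ω₀ F Ω₂ t =
      ((1 - α) / B) • (F (Ω₁ t) - F (Ω₂ t)) +
        (α / (B * Real.Gamma α)) •
          ∫ p in (0:ℝ)..t, (t - p) ^ (α - 1) • (F (Ω₁ p) - F (Ω₂ p)) := by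
  simp only [picard, smul_sub, intervalIntegral.integral_sub h₁ h₂]
  abel

theorem norm_picard_sub_picard_le {M : ℝ} (hα : 0 < α) (hα1 : α < 1) (hB : 0 < B) (hL : 0 ≤ L)
    (hLip : ∀ x y : V, ‖F x - F y‖ ≤ L * ‖x - y‖) (ht : 0 ≤ t)
    (hc₁ : ContinuousOn Ω₁ (Icc 0 t)) (hc₂ : ContinuousOn Ω₂ (Icc 0 t))
    (hM : ∀ s ∈ Icc 0 t, ‖Ω₁ s - Ω₂ s‖ ≤ M) :
    ‖picard α B Ω₀ F Ω₁ t - picard α B Ω₀ F Ω₂ t‖ ≤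
      L * ((1 - α) / B + t ^ α / (B * Real.Gamma α)) * M := by
  have hF : Continuous F :=
    (LipschitzWith.of_dist_le_mul (K := L.toNNReal) fun x y => by
      simpa [dist_eq_norm, Real.coe_toNNReal L hL] using hLip x y).continuous
  have hFΩ : ∀ s ∈ Icc 0 t, ‖F (Ω₁ s) - F (Ω₂ s)‖ ≤ L * M := fun s hs =>
    (hLip _ _).trans (mul_le_mul_of_nonneg_left (hM s hs) hL)
  have hΓ := Real.Gamma_pos_of_pos hα
  have hlocal : 0 ≤ (1 - α) / B := div_nonneg (by linarith) hB.le
  have hmemory : 0 ≤ α / (B * Real.Gamma α) := by positivity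
  rw [picard_sub_picard ((hF.comp_continuousOn hc₁).intervalIntegrable_sub_rpow_smul hα ht)
    ((hF.comp_continuousOn hc₂).intervalIntegrable_sub_rpow_smul hα ht)]
  calc _ ≤ (1 - α) / B * (L * M) + α / (B * Real.Gamma α) * (L * M * (t ^ α / α)) := by
        refine (norm_add_le _ _).trans ?_
        rw [norm_smul, norm_smul, Real.norm_of_nonneg hlocal, Real.norm_of_nonneg hmemory]
        gcongr
        · exact hFΩ t (right_mem_Icc.mpr ht)
        · exact norm_integral_sub_rpow_smul_le hα ht fun p hp => hFΩ p (Ioc_subset_Icc_self hp)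
    _ = L * ((1 - α) / B + t ^ α / (B * Real.Gamma α)) * M := by
        field_simp

end Picard

theorem picard_operator_lipschitz_general (α B δ L : ℝ) (Ω₀ : V) (F : V → V)
    (hα : 0 < α) (hα1 : α < 1) (hB : 0 < B) (hδ : 0 < δ) (hL : 0 ≤ L)
    (hLip : ∀ x y : V, ‖F x - F y‖ ≤ L * ‖x - y‖)
    (Ω₁ Ω₂ : ℝ → V)
    (hc₁ : ContinuousOn Ω₁ (Icc 0 δ)) (hc₂ : ContinuousOn Ω₂ (Icc 0 δ)) :
    (⨆ t ∈ Icc (0:ℝ) δ, ‖picard α B Ω₀ F Ω₁ t - picard α B Ω₀ F Ω₂ t‖) ≤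
      L * ((1 - α) / B + δ ^ α / (B * Real.Gamma α)) *
        ⨆ t ∈ Icc (0:ℝ) δ, ‖Ω₁ t - Ω₂ t‖ := by
  set M := ⨆ t ∈ Icc (0:ℝ) δ, ‖Ω₁ t - Ω₂ t‖
  have hM : ∀ s ∈ Icc 0 δ, ‖Ω₁ s - Ω₂ s‖ ≤ M := fun s hs =>
    norm_le_biSup_norm_of_continuousOn isCompact_Icc (hc₁.sub hc₂) hs
  have hM0 : 0 ≤ M := (norm_nonneg _).trans (hM 0 (left_mem_Icc.mpr hδ.le))
  have hΓ := Real.Gamma_pos_of_pos hα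
  have hlocal : 0 ≤ 1 - α := by linarith
  refine Real.iSup_le (fun t => Real.iSup_le (fun ht => ?_) (by positivity)) (by positivity)
  have hsub : Icc 0 t ⊆ Icc 0 δ := Icc_subset_Icc_right ht.2
  calc _ ≤ L * ((1 - α) / B + t ^ α / (B * Real.Gamma α)) * M :=
        norm_picard_sub_picard_le hα hα1 hB hL hLip ht.1 (hc₁.mono hsub) (hc₂.mono hsub)
          fun s hs => hM s (hsub hs)
    _ ≤ L * ((1 - α) / B + δ ^ α / (B * Real.Gamma α)) * M := by
        have := Real.rpow_le_rpow ht.1 ht.2 hα.le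
        gcongr

theorem picard_operator_lipschitz (α B δ L : ℝ) (Ω₀ : V) (F : V → V)
    (hα : 0 < α) (hα1 : α < 1) (hB : 0 < B) (hδ : 0 < δ) (hL : 0 ≤ L)
    (hLip : ∀ x y : V, ‖F x - F y‖ ≤ L * ‖x - y‖)
    (Ω₁ Ω₂ : ℝ → V)
    (hc₁ : ContinuousOn Ω₁ (Icc 0 δ)) (hc₂ : ContinuousOn Ω₂ (Icc 0 δ))
    (h0₁ : Ω₁ 0 = Ω₀) (h0₂ : Ω₂ 0 = Ω₀) :
    (⨆ t ∈ Icc (0:ℝ) δ, ‖picard α B Ω₀ F Ω₁ t - picard α B Ω₀ F Ω₂ t‖) ≤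
      L * ((1 - α) / B + δ ^ α / (B * Real.Gamma α)) *
        ⨆ t ∈ Icc (0:ℝ) δ, ‖Ω₁ t - Ω₂ t‖ :=
  picard_operator_lipschitz_general α B δ L Ω₀ F hα hα1 hB hδ hL hLip Ω₁ Ω₂ hc₁ hc₂
end

section
/- Let (X, ‖·‖) be a Banach space and Θ : X → X a self-map satisfying ‖Θx − Θy‖ ≤ K‖Θx − x‖ + k‖x − y‖ for all x, y ∈ X, where K ≥ 0 and 0 ≤ k < 1. Suppose Θ has a fixed point p. Then Θ is Picard-stable: for any bounded sequence {xₙ} in X, if ‖x_{n+1} − Θxₙ‖ → 0 as n → ∞, then xₙ → p. -/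
/-!
At the fixed point the term `K‖Θp - p‖` vanishes, so `‖Θy - p‖ ≤ k‖y - p‖` for every `y`, and the
triangle inequality gives `‖x (n+1) - p‖ ≤ k‖xₙ - p‖ + ‖x (n+1) - Θxₙ‖`. A nonnegative sequence
driven by a contraction factor `k < 1` and a null forcing term tends to `0`.
-/

open Filter Topology

lemma le_pow_mul_add_of_le_mul_add {a e : ℕ → ℝ} {k c : ℝ} {N : ℕ}
    (hk0 : 0 ≤ k) (hc : 0 ≤ c) (hrec : ∀ n, a (n + 1) ≤ k * a n + e n)
    (he : ∀ n ≥ N, e n ≤ (1 - k) * c) :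
    ∀ n ≥ N, a n ≤ k ^ (n - N) * a N + c := by
  intro n hn
  induction n, hn using Nat.le_induction with
  | base => simpa using hc
  | succ n hn ih =>
    calc a (n + 1) ≤ k * a n + e n := hrec n
      _ ≤ k * (k ^ (n - N) * a N + c) + (1 - k) * c := by gcongr; exact he n hn
      _ = k ^ (n + 1 - N) * a N + c := by rw [Nat.sub_add_comm hn, pow_succ]; ring

lemma tendsto_zero_of_le_mul_add {a e : ℕ → ℝ} {k : ℝ} (hk0 : 0 ≤ k) (hk1 : k < 1)
    (ha : ∀ n, 0 ≤ a n) (hrec : ∀ n, a (n + 1) ≤ k * a n + e n)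
    (he : Tendsto e atTop (𝓝 0)) : Tendsto a atTop (𝓝 0) := by
  refine tendsto_order.2 ⟨fun b hb => Eventually.of_forall fun n => hb.trans_le (ha n),
    fun ε hε => ?_⟩
  have hδ : 0 < (1 - k) * (ε / 2) := by nlinarith
  obtain ⟨N, hN⟩ := eventually_atTop.1 (he.eventually (eventually_le_nhds hδ))
  have hgeom : Tendsto (fun n => k ^ (n - N) * a N) atTop (𝓝 0) := by
    simpa using ((tendsto_pow_atTop_nhds_zero_of_lt_one hk0 hk1).comp
      (tendsto_sub_atTop_nat N)).mul_const (a N)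
  filter_upwards [hgeom.eventually (eventually_lt_nhds (half_pos hε)), eventually_ge_atTop N]
    with n hgeom_lt hn
  linarith [le_pow_mul_add_of_le_mul_add hk0 (half_pos hε).le hrec hN n hn]

lemma norm_sub_le_mul_of_isFixedPt {X : Type*} [SeminormedAddCommGroup X] {Θ : X → X} {K k : ℝ}
    (hΘ : ∀ x y : X, ‖Θ x - Θ y‖ ≤ K * ‖Θ x - x‖ + k * ‖x - y‖) {p : X}
    (hp : Function.IsFixedPt Θ p) (y : X) :
    ‖Θ y - p‖ ≤ k * ‖y - p‖ := by
  simpa [hp.eq, norm_sub_rev] using hΘ p y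

theorem theta_stable_general {X : Type*} [NormedAddCommGroup X]
    (Θ : X → X) (K k : ℝ) (hk0 : 0 ≤ k) (hk1 : k < 1)
    (hΘ : ∀ x y : X, ‖Θ x - Θ y‖ ≤ K * ‖Θ x - x‖ + k * ‖x - y‖)
    (p : X) (hp : Θ p = p)
    (x : ℕ → X)
    (herr : Filter.Tendsto (fun n => ‖x (n + 1) - Θ (x n)‖) Filter.atTop (nhds 0)) :
    Filter.Tendsto x Filter.atTop (nhds p) := by
  rw [tendsto_iff_norm_sub_tendsto_zero]
  refine tendsto_zero_of_le_mul_add hk0 hk1 (fun n => norm_nonneg _) (fun n => ?_) herr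
  calc ‖x (n + 1) - p‖ ≤ ‖x (n + 1) - Θ (x n)‖ + ‖Θ (x n) - p‖ :=
        norm_sub_le_norm_sub_add_norm_sub _ _ _
    _ ≤ k * ‖x n - p‖ + ‖x (n + 1) - Θ (x n)‖ := by
      linarith [norm_sub_le_mul_of_isFixedPt hΘ hp (x n)]

theorem theta_stable {X : Type*} [NormedAddCommGroup X] [NormedSpace ℝ X] [CompleteSpace X]
    (Θ : X → X) (K k : ℝ) (hK : 0 ≤ K) (hk0 : 0 ≤ k) (hk1 : k < 1)
    (hΘ : ∀ x y : X, ‖Θ x - Θ y‖ ≤ K * ‖Θ x - x‖ + k * ‖x - y‖)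
    (p : X) (hp : Θ p = p)
    (x : ℕ → X) (hbdd : ∃ M : ℝ, ∀ n, ‖x n‖ ≤ M)
    (herr : Filter.Tendsto (fun n => ‖x (n + 1) - Θ (x n)‖) Filter.atTop (nhds 0)) :
    Filter.Tendsto x Filter.atTop (nhds p) :=
  theta_stable_general Θ K k hk0 hk1 hΘ p hp x herr
end
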